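/- Let t⁰, t¹ ∈ (0,∞)^V be such that K_{t⁰} and K_{t⁰+t¹} are invertible, and set W̃ = W K_{t⁰}^{-1} and H̃_{1/(2t¹)} = diag(1/t¹) − W̃. Then (H̃_{1/(2t¹)})^{-1} = diag(t⁰) H_{1/(2t⁰)} (H_{1/(2(t⁰+t¹))})^{-1} H_{1/(2t⁰)} diag(t⁰) − diag(t⁰) H_{1/(2t⁰)} diag(t⁰). -/

import Mathlib

open Matrix

/-- The matrix `K_t = Id - diag(t) W`. -/
noncomputable def Kmat {V : Type*} [Fintype V] [DecidableEq V]
    (W : Matrix V V ℝ) (t : V → ℝ) : Matrix V V ℝ :=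
  1 - Matrix.diagonal t * W

/-! Since `K_{t⁰} - K_{t⁰+t¹} = diag(t¹) W`, one has `H̃_{1/(2t¹)} = diag(1/t¹) K_{t⁰+t¹} K_{t⁰}⁻¹`,
so `H̃_{1/(2t¹)}⁻¹ = K_{t⁰} K_{t⁰+t¹}⁻¹ diag(t¹)`. On the other side, the right-hand side factors as
`K_{t⁰} H_{1/(2(t⁰+t¹))}⁻¹ (H_{1/(2t⁰)} - H_{1/(2(t⁰+t¹))}) diag(t⁰)`, and the middle difference is
the diagonal matrix `diag(t¹/(t⁰+t¹)) = diag(t⁰+t¹)⁻¹ diag(t¹)`, which gives the same product. -/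

section

variable {V : Type*} [Fintype V] [DecidableEq V]

/-- The matrix `H_{1/(2t)} = diag(1/t) - W`. -/
noncomputable def Hmat (W : Matrix V V ℝ) (t : V → ℝ) : Matrix V V ℝ :=
  diagonal (fun i => 1 / t i) - W

theorem diagonal_mul_diagonal_one_div {t : V → ℝ} (ht : ∀ i, t i ≠ 0) :
    diagonal t * diagonal (fun i => 1 / t i) = 1 := by
  rw [diagonal_mul_diagonal, ← diagonal_one]
  exact congrArg diagonal (funext fun i => mul_one_div_cancel (ht i))

theorem diagonal_one_div_mul_diagonal {t : V → ℝ} (ht : ∀ i, t i ≠ 0) :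
    diagonal (fun i => 1 / t i) * diagonal t = 1 := by
  rw [diagonal_mul_diagonal, ← diagonal_one]
  exact congrArg diagonal (funext fun i => one_div_mul_cancel (ht i))

theorem Kmat_sub_Kmat_add (W : Matrix V V ℝ) (t s : V → ℝ) :
    Kmat W t - Kmat W (t + s) = diagonal s * W := by
  rw [Kmat, Kmat, show diagonal (t + s) = diagonal t + diagonal s from (diagonal_add t s).symm,
    add_mul]
  abel

theorem Kmat_eq_diagonal_mul_Hmat (W : Matrix V V ℝ) {t : V → ℝ} (ht : ∀ i, t i ≠ 0) :
    Kmat W t = diagonal t * Hmat W t := by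
  rw [Kmat, Hmat, mul_sub, diagonal_mul_diagonal_one_div ht]

theorem isUnit_Hmat_of_isUnit_Kmat {W : Matrix V V ℝ} {t : V → ℝ} (ht : ∀ i, t i ≠ 0)
    (hK : IsUnit (Kmat W t)) : IsUnit (Hmat W t) :=
  isUnit_of_mul_isUnit_right (Kmat_eq_diagonal_mul_Hmat W ht ▸ hK)

theorem inv_Kmat_eq_inv_Hmat_mul (W : Matrix V V ℝ) {t : V → ℝ} (ht : ∀ i, t i ≠ 0) :
    (Kmat W t)⁻¹ = (Hmat W t)⁻¹ * diagonal (fun i => 1 / t i) := by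
  rw [Kmat_eq_diagonal_mul_Hmat W ht, Matrix.mul_inv_rev,
    inv_eq_right_inv (diagonal_mul_diagonal_one_div ht)]

theorem Hmat_sub_Hmat_add_mul_diagonal (W : Matrix V V ℝ) {t s : V → ℝ}
    (ht : ∀ i, t i ≠ 0) (hts : ∀ i, t i + s i ≠ 0) :
    (Hmat W t - Hmat W (t + s)) * diagonal t =
      diagonal (fun i => 1 / (t i + s i)) * diagonal s := by
  rw [Hmat, Hmat, sub_sub_sub_cancel_right, diagonal_sub, diagonal_mul_diagonal,
    diagonal_mul_diagonal]
  refine congrArg diagonal (funext fun i => ?_)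
  simp only [Pi.add_apply]
  field_simp [ht i, hts i]
  ring

theorem diagonal_one_div_sub_mul_inv_Kmat {W : Matrix V V ℝ} {t s : V → ℝ}
    (hs : ∀ i, s i ≠ 0) (hK : IsUnit (Kmat W t)) :
    diagonal (fun i => 1 / s i) - W * (Kmat W t)⁻¹ =
      diagonal (fun i => 1 / s i) * Kmat W (t + s) * (Kmat W t)⁻¹ := by
  have hKs : diagonal (fun i => 1 / s i) * Kmat W (t + s) =
      diagonal (fun i => 1 / s i) * Kmat W t - W := by
    calc diagonal (fun i => 1 / s i) * Kmat W (t + s)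
        = diagonal (fun i => 1 / s i) * Kmat W t -
            diagonal (fun i => 1 / s i) * (Kmat W t - Kmat W (t + s)) := by
          rw [mul_sub]; abel
      _ = diagonal (fun i => 1 / s i) * Kmat W t - W := by
          rw [Kmat_sub_Kmat_add, ← mul_assoc, diagonal_one_div_mul_diagonal hs, one_mul]
  rw [hKs, sub_mul, mul_nonsing_inv_cancel_right _ _ ((isUnit_iff_isUnit_det _).mp hK)]

theorem inv_diagonal_one_div_sub_mul_inv_Kmat {W : Matrix V V ℝ} {t s : V → ℝ}
    (hs : ∀ i, s i ≠ 0) (hK₀ : IsUnit (Kmat W t)) (hK : IsUnit (Kmat W (t + s))) :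
    (diagonal (fun i => 1 / s i) - W * (Kmat W t)⁻¹)⁻¹ =
      Kmat W t * (Kmat W (t + s))⁻¹ * diagonal s := by
  rw [diagonal_one_div_sub_mul_inv_Kmat hs hK₀]
  refine inv_eq_right_inv ?_
  calc diagonal (fun i => 1 / s i) * Kmat W (t + s) * (Kmat W t)⁻¹ *
        (Kmat W t * (Kmat W (t + s))⁻¹ * diagonal s)
      = diagonal (fun i => 1 / s i) *
          (Kmat W (t + s) * ((Kmat W t)⁻¹ * Kmat W t) * (Kmat W (t + s))⁻¹) *
          diagonal s := by noncomm_ring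
    _ = 1 := by
      rw [nonsing_inv_mul _ ((isUnit_iff_isUnit_det _).mp hK₀), mul_one,
        mul_nonsing_inv _ ((isUnit_iff_isUnit_det _).mp hK), mul_one,
        diagonal_one_div_mul_diagonal hs]

theorem diagonal_mul_Hmat_sandwich_eq {W : Matrix V V ℝ} {t s : V → ℝ}
    (ht : ∀ i, t i ≠ 0) (hts : ∀ i, t i + s i ≠ 0) (hK : IsUnit (Kmat W (t + s))) :
    diagonal t * Hmat W t * (Hmat W (t + s))⁻¹ * Hmat W t * diagonal t -
        diagonal t * Hmat W t * diagonal t =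
      Kmat W t * (Kmat W (t + s))⁻¹ * diagonal s := by
  have hH : IsUnit (Hmat W (t + s)).det :=
    (isUnit_iff_isUnit_det _).mp (isUnit_Hmat_of_isUnit_Kmat hts hK)
  set H₀ := Hmat W t
  set H := Hmat W (t + s)
  calc diagonal t * H₀ * H⁻¹ * H₀ * diagonal t - diagonal t * H₀ * diagonal t
      = diagonal t * H₀ * H⁻¹ * H₀ * diagonal t - diagonal t * H₀ * (H⁻¹ * H) * diagonal t := by
        rw [nonsing_inv_mul _ hH, mul_one]
    _ = diagonal t * H₀ * H⁻¹ * ((H₀ - H) * diagonal t) := by noncomm_ring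
    _ = Kmat W t * (Kmat W (t + s))⁻¹ * diagonal s := by
        rw [Hmat_sub_Hmat_add_mul_diagonal W ht hts, inv_Kmat_eq_inv_Hmat_mul (t := t + s) W hts,
          Kmat_eq_diagonal_mul_Hmat W ht]
        noncomm_ring

end

theorem H_tilde_inverse_formula_general (N : ℕ) (W : Matrix (Fin N) (Fin N) ℝ)
    (t₀ t₁ : Fin N → ℝ) (ht₀ : ∀ i, 0 < t₀ i) (ht₁ : ∀ i, 0 < t₁ i)
    (hK₀ : IsUnit (Kmat W t₀)) (hK : IsUnit (Kmat W (t₀ + t₁))) :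
    (Matrix.diagonal (fun i => 1 / t₁ i) - W * (Kmat W t₀)⁻¹)⁻¹ =
      Matrix.diagonal t₀ * (Matrix.diagonal (fun i => 1 / t₀ i) - W) *
          (Matrix.diagonal (fun i => 1 / (t₀ i + t₁ i)) - W)⁻¹ *
          (Matrix.diagonal (fun i => 1 / t₀ i) - W) * Matrix.diagonal t₀ -
        Matrix.diagonal t₀ * (Matrix.diagonal (fun i => 1 / t₀ i) - W) *
          Matrix.diagonal t₀ := by
  have ht₀' : ∀ i, t₀ i ≠ 0 := fun i => (ht₀ i).ne'
  have hts : ∀ i, t₀ i + t₁ i ≠ 0 := fun i => (add_pos (ht₀ i) (ht₁ i)).ne'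
  rw [inv_diagonal_one_div_sub_mul_inv_Kmat (fun i => (ht₁ i).ne') hK₀ hK]
  exact (diagonal_mul_Hmat_sandwich_eq ht₀' hts hK).symm

/-- With `W̃ = W K_{t⁰}⁻¹` and `H̃_{1/(2t¹)} = diag(1/t¹) - W̃`, one has
`H̃_{1/(2t¹)}⁻¹ = diag(t⁰) H_{1/(2t⁰)} H_{1/(2(t⁰+t¹))}⁻¹ H_{1/(2t⁰)} diag(t⁰)
  - diag(t⁰) H_{1/(2t⁰)} diag(t⁰)`. -/
theorem H_tilde_inverse_formula (N : ℕ) (W : Matrix (Fin N) (Fin N) ℝ)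
    (hWsymm : W.IsSymm) (hWnonneg : ∀ i j, 0 ≤ W i j)
    (t₀ t₁ : Fin N → ℝ) (ht₀ : ∀ i, 0 < t₀ i) (ht₁ : ∀ i, 0 < t₁ i)
    (hK₀ : IsUnit (Kmat W t₀)) (hK : IsUnit (Kmat W (t₀ + t₁))) :
    (Matrix.diagonal (fun i => 1 / t₁ i) - W * (Kmat W t₀)⁻¹)⁻¹ =
      Matrix.diagonal t₀ * (Matrix.diagonal (fun i => 1 / t₀ i) - W) *
          (Matrix.diagonal (fun i => 1 / (t₀ i + t₁ i)) - W)⁻¹ *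
          (Matrix.diagonal (fun i => 1 / t₀ i) - W) * Matrix.diagonal t₀ -
        Matrix.diagonal t₀ * (Matrix.diagonal (fun i => 1 / t₀ i) - W) *
          Matrix.diagonal t₀ :=
  H_tilde_inverse_formula_general N W t₀ t₁ ht₀ ht₁ hK₀ hK
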